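/- Let F(v) = (a·v + √Q·b)²/(σ² + a²(P − v²)) and suppose F(0) < ρ ≤ F(√P). Then v₂* = (√A − √Q·b)/(a(1+ρ)), with A = Pρ(1+ρ)a² + ρ(1+ρ)σ² − ρQb², is the minimum of the set {v : 0 ≤ v ≤ √P, F(v) ≥ ρ}, and the maximum of P − v² over this set equals P − v₂*². -/

import Mathlib

/-!
Write `c = √Q·b`. The identity
`(a(1+ρ)v + c)² − A = (1+ρ)((av + c)² − ρ(σ² + a²(P − v²)))`
completes the square: on `[0, √P]`, where the denominator of `F` is positive and
`a(1+ρ)v + c ≥ 0`, the constraint `F(v) ≥ ρ` becomes `√A ≤ a(1+ρ)v + c`, i.e. `v₂* ≤ v`.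
So the feasible set is the interval `[v₂*, √P]`; the hypotheses `F(0) < ρ ≤ F(√P)` place
`v₂*` in `(0, √P]`, and `P − v²` is decreasing for `v ≥ 0`.
-/

open Real Set

noncomputable section

def sinr (a c σ2 P v : ℝ) : ℝ := (a * v + c) ^ 2 / (σ2 + a ^ 2 * (P - v ^ 2))

def sinrThreshold (a c σ2 P ρ : ℝ) : ℝ :=
  (√(ρ * (1 + ρ) * (a ^ 2 * P + σ2) - ρ * c ^ 2) - c) / (a * (1 + ρ))

end

section SinrThreshold

variable {a c σ2 P ρ v : ℝ}

theorem sq_sub_eq_mul_sinr_gap (a c σ2 P ρ v : ℝ) :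
    (a * (1 + ρ) * v + c) ^ 2 - (ρ * (1 + ρ) * (a ^ 2 * P + σ2) - ρ * c ^ 2) =
      (1 + ρ) * ((a * v + c) ^ 2 - ρ * (σ2 + a ^ 2 * (P - v ^ 2))) := by
  ring

theorem le_sinr_iff_sqrt_le (hρ : 0 < 1 + ρ) (hD : 0 < σ2 + a ^ 2 * (P - v ^ 2))
    (hlin : 0 ≤ a * (1 + ρ) * v + c) :
    ρ ≤ sinr a c σ2 P v ↔
      √(ρ * (1 + ρ) * (a ^ 2 * P + σ2) - ρ * c ^ 2) ≤ a * (1 + ρ) * v + c := by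
  rw [sinr, le_div_iff₀ hD, sqrt_le_left hlin, ← sub_nonneg (a := (a * (1 + ρ) * v + c) ^ 2),
    sq_sub_eq_mul_sinr_gap, mul_nonneg_iff_of_pos_left hρ, sub_nonneg]

theorem sinr_denom_pos (hσ : 0 < σ2) (hP : 0 ≤ P) (hv : 0 ≤ v) (hvP : v ≤ √P) :
    0 < σ2 + a ^ 2 * (P - v ^ 2) := by
  have := (le_sqrt hv hP).mp hvP
  positivity

theorem le_sinr_iff_sinrThreshold_le (ha : 0 < a) (hσ : 0 < σ2) (hP : 0 ≤ P) (hρ : 0 < ρ)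
    (hc : 0 ≤ c) (hv : 0 ≤ v) (hvP : v ≤ √P) :
    ρ ≤ sinr a c σ2 P v ↔ sinrThreshold a c σ2 P ρ ≤ v := by
  have hk : 0 < a * (1 + ρ) := by positivity
  rw [le_sinr_iff_sqrt_le (by linarith) (sinr_denom_pos hσ hP hv hvP) (by positivity),
    sinrThreshold, div_le_iff₀ hk]
  constructor <;> intro h <;> linarith

theorem setOf_le_sinr_eq_Icc (ha : 0 < a) (hσ : 0 < σ2) (hP : 0 ≤ P) (hρ : 0 < ρ)
    (hc : 0 ≤ c) :
    {v | 0 ≤ v ∧ v ≤ √P ∧ ρ ≤ sinr a c σ2 P v} =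
      Icc (max 0 (sinrThreshold a c σ2 P ρ)) √P := by
  ext v
  simp only [mem_ofPred_eq, mem_Icc, max_le_iff]
  constructor
  · rintro ⟨hv, hvP, hF⟩
    exact ⟨⟨hv, (le_sinr_iff_sinrThreshold_le ha hσ hP hρ hc hv hvP).mp hF⟩, hvP⟩
  · rintro ⟨⟨hv, ht⟩, hvP⟩
    exact ⟨hv, hvP, (le_sinr_iff_sinrThreshold_le ha hσ hP hρ hc hv hvP).mpr ht⟩

end SinrThreshold

/-- When `F(0) < ρ ≤ F(√P)`, the closed-form `v₂*` is the least element of the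
feasible set `{v : 0 ≤ v ≤ √P, F(v) ≥ ρ}`, and `P − v₂*²` is the greatest value
of `P − v²` over this set. -/
theorem stmt_10 (a b P Q σ2 ρ : ℝ) (ha : 0 < a) (hb : 0 < b) (hP : 0 < P)
    (hQ : 0 < Q) (hσ : 0 < σ2) (hρ : 0 < ρ)
    (F : ℝ → ℝ) (A v2star : ℝ)
    (hF : ∀ v : ℝ, F v =
      (a * v + Real.sqrt Q * b) ^ 2 / (σ2 + a ^ 2 * (P - v ^ 2)))
    (hlow : F 0 < ρ) (hhigh : ρ ≤ F (Real.sqrt P))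
    (hA : A = P * ρ * (1 + ρ) * a ^ 2 + ρ * (1 + ρ) * σ2 - ρ * Q * b ^ 2)
    (hv2 : v2star = (Real.sqrt A - Real.sqrt Q * b) / (a * (1 + ρ))) :
    IsLeast {v : ℝ | 0 ≤ v ∧ v ≤ Real.sqrt P ∧ F v ≥ ρ} v2star ∧
    IsGreatest ((fun v => P - v ^ 2) ''
      {v : ℝ | 0 ≤ v ∧ v ≤ Real.sqrt P ∧ F v ≥ ρ}) (P - v2star ^ 2) := by
  have hc : 0 ≤ √Q * b := by positivity
  obtain rfl : F = sinr a (√Q * b) σ2 P := funext hF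
  obtain rfl : v2star = sinrThreshold a (√Q * b) σ2 P ρ := by
    rw [hv2, hA, sinrThreshold, mul_pow, sq_sqrt hQ.le]
    ring_nf
  set t := sinrThreshold a (√Q * b) σ2 P ρ
  have hsP := sqrt_nonneg P
  have ht_pos : 0 < t := not_le.mp fun h => hlow.not_ge <|
    (le_sinr_iff_sinrThreshold_le ha hσ hP.le hρ hc le_rfl hsP).mpr h
  have ht_le : t ≤ √P := (le_sinr_iff_sinrThreshold_le ha hσ hP.le hρ hc hsP le_rfl).mp hhigh
  simp only [ge_iff_le]
  rw [setOf_le_sinr_eq_Icc ha hσ hP.le hρ hc, max_eq_right ht_pos.le]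
  have hanti : AntitoneOn (fun v : ℝ => P - v ^ 2) (Icc t √P) :=
    fun x hx y _ hxy => by nlinarith [ht_pos.le.trans hx.1]
  exact ⟨isLeast_Icc ht_le, hanti.map_isLeast (isLeast_Icc ht_le)⟩
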